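/- Define V(x,S) as the dynamic programming value function: V(x,∅) = x and V(x,S) = max{max_{j∈S}(−c_j + E[V(max(x,X_j), S∖{j})]), x, max_{j∈S} E[X_j]} for independent random variables X_j with values in [0,B]. Suppose for each j ∈ S the estimates satisfy |E[φ(X̃_j)] − E[φ(X_j)]| ≤ ε for φ in the class of 1-Lipschitz nondecreasing functions, and |E[X̃_j] − E[X_j]| ≤ ε. Then the estimated value function Ṽ built with X̃_j in place of X_j satisfies |Ṽ(x,S) − V(x,S)| ≤ |S|·ε for all x ∈ [0,B]. -/

import Mathlib

open MeasureTheory ProbabilityTheory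

noncomputable def valueFn {Ω : Type} [MeasurableSpace Ω] (P : Measure Ω) {N : ℕ}
    (c : Fin N → ℝ) (X : Fin N → Ω → ℝ) (x : ℝ) (S : Finset (Fin N)) : ℝ :=
  if h : S.Nonempty then
    max
      (S.attach.sup' (Finset.attach_nonempty_iff.mpr h)
        (fun j => -c j.1 + ∫ ω, valueFn P c X (max x (X j.1 ω)) (S.erase j.1) ∂P))
      (max x (S.sup' h (fun j => ∫ ω, X j ω ∂P)))
  else x
termination_by S.card
decreasing_by exact Finset.card_erase_lt_of_mem j.2

/-! The error of `Ṽ(x, S)` at a first stage `j` splits into `Ṽ(·, S ∖ {j}) - V(·, S ∖ {j})`,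
integrated against the law of `X̃ⱼ`, which is at most `(|S| - 1) ε` by induction, and the change of
law `X̃ⱼ ↦ Xⱼ` applied to `y ↦ V(max x y, S ∖ {j})`, which is at most `ε` because this function is
nondecreasing and 1-Lipschitz. These two properties of `V` are themselves inherited through the
recursion, since `max` and integration against a probability measure preserve them. -/

theorem Finset.abs_sup'_sub_sup'_le {α β : Type*} [AddCommGroup β] [LinearOrder β]
    [IsOrderedAddMonoid β] {s : Finset α} (hs : s.Nonempty) {f g : α → β} {ε : β}
    (h : ∀ i ∈ s, |f i - g i| ≤ ε) : |s.sup' hs f - s.sup' hs g| ≤ ε := by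
  rw [abs_sub_le_iff, sub_le_iff_le_add', sub_le_iff_le_add']
  constructor <;> refine Finset.sup'_le _ _ fun i hi => ?_
  · calc f i ≤ g i + ε := sub_le_iff_le_add'.mp (abs_sub_le_iff.mp (h i hi)).1
      _ ≤ s.sup' hs g + ε := by gcongr; exact Finset.le_sup' g hi
  · calc g i ≤ f i + ε := sub_le_iff_le_add'.mp (abs_sub_le_iff.mp (h i hi)).2
      _ ≤ s.sup' hs f + ε := by gcongr; exact Finset.le_sup' f hi

theorem LipschitzWith.comp_const_max {K : NNReal} {f : ℝ → ℝ} (hf : LipschitzWith K f) (a : ℝ) :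
    LipschitzWith K fun y => f (max a y) := by
  simpa [Function.comp_def] using hf.comp (LipschitzWith.id.const_max a)

theorem LipschitzWith.comp_max_const {K : NNReal} {f : ℝ → ℝ} (hf : LipschitzWith K f) (a : ℝ) :
    LipschitzWith K fun y => f (max y a) := by
  simpa [Function.comp_def] using hf.comp (LipschitzWith.id.max_const a)

section Integral

variable {Ω : Type*} [MeasurableSpace Ω] {P : Measure Ω}

theorem LipschitzWith.integrable_comp [IsFiniteMeasure P] {K : NNReal} {f : ℝ → ℝ}
    (hf : LipschitzWith K f) {Z : Ω → ℝ} (hZ : Measurable Z) {B : ℝ} (hZB : ∀ ω, |Z ω| ≤ B) :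
    Integrable (fun ω => f (Z ω)) P := by
  refine .of_bound (hf.continuous.measurable.comp hZ).aestronglyMeasurable (|f 0| + K * B)
    (ae_of_all _ fun ω => ?_)
  have hdist := hf.dist_le_mul (Z ω) 0
  rw [Real.dist_eq, Real.dist_eq, sub_zero] at hdist
  calc ‖f (Z ω)‖ ≤ |f 0| + |f (Z ω) - f 0| := by
        linarith [Real.norm_eq_abs (f (Z ω)), abs_sub_abs_le_abs_sub (f (Z ω)) (f 0)]
    _ ≤ |f 0| + K * B := by gcongr; exact hdist.trans (by gcongr; exact hZB ω)

variable [IsProbabilityMeasure P]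

theorem abs_integral_sub_integral_le {f g : Ω → ℝ} {C : ℝ} (hf : Integrable f P)
    (hg : Integrable g P) (h : ∀ ω, |f ω - g ω| ≤ C) :
    |∫ ω, f ω ∂P - ∫ ω, g ω ∂P| ≤ C := by
  rw [← integral_sub hf hg]
  simpa using norm_integral_le_of_norm_le_const (μ := P)
    (ae_of_all _ fun ω => (Real.norm_eq_abs _).trans_le (h ω))

theorem LipschitzWith.integral {α : Type*} [PseudoMetricSpace α] {K : NNReal} {F : α → Ω → ℝ}
    (hF : ∀ ω, LipschitzWith K (F · ω)) (hint : ∀ x, Integrable (F x) P) :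
    LipschitzWith K fun x => ∫ ω, F x ω ∂P :=
  .of_dist_le_mul fun x y => by
    rw [Real.dist_eq]
    exact abs_integral_sub_integral_le (hint x) (hint y) fun ω => (hF ω).dist_le_mul x y

end Integral

section ValueFn

variable {Ω : Type} [MeasurableSpace Ω] {P : Measure Ω} {N : ℕ} {c : Fin N → ℝ}

@[simp]
theorem valueFn_empty (X : Fin N → Ω → ℝ) (x : ℝ) : valueFn P c X x ∅ = x := by
  rw [valueFn]; simp

variable [IsProbabilityMeasure P] {B : ℝ}

section Regularity

variable {Y : Fin N → Ω → ℝ} (hY : ∀ j, Measurable (Y j)) (hYB : ∀ j ω, |Y j ω| ≤ B)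
include hY hYB

theorem lipschitzWith_valueFn (S : Finset (Fin N)) :
    LipschitzWith 1 fun x => valueFn P c Y x S := by
  induction S using Finset.strongInduction with
  | H S ih =>
  rcases S.eq_empty_or_nonempty with rfl | hS
  · simp only [valueFn_empty]
    exact LipschitzWith.id
  refine .mk_one fun x y => ?_
  rw [valueFn, valueFn, dif_pos hS, dif_pos hS, Real.dist_eq, Real.dist_eq]
  refine (abs_max_sub_max_le_max _ _ _ _).trans (max_le ?_ (abs_max_sub_max_le_abs _ _ _))
  refine Finset.abs_sup'_sub_sup'_le _ fun j _ => ?_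
  have hrec := ih _ (Finset.erase_ssubset j.2)
  have hcont : LipschitzWith 1 fun x => ∫ ω, valueFn P c Y (max x (Y j ω)) (S.erase j) ∂P :=
    .integral (fun ω => hrec.comp_max_const _)
      (fun x => (hrec.comp_const_max x).integrable_comp (hY j) (hYB j))
  rw [add_sub_add_left_eq_sub]
  simpa [Real.dist_eq] using hcont.dist_le_mul x y

theorem integrable_valueFn_max (S : Finset (Fin N)) (x : ℝ) {Z : Ω → ℝ} (hZ : Measurable Z)
    (hZB : ∀ ω, |Z ω| ≤ B) : Integrable (fun ω => valueFn P c Y (max x (Z ω)) S) P :=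
  ((lipschitzWith_valueFn hY hYB S).comp_const_max x).integrable_comp hZ hZB

theorem monotone_valueFn (S : Finset (Fin N)) : Monotone fun x => valueFn P c Y x S := by
  induction S using Finset.strongInduction with
  | H S ih =>
  intro x y hxy
  rcases S.eq_empty_or_nonempty with rfl | hS
  · simpa using hxy
  dsimp only
  rw [valueFn, valueFn, dif_pos hS, dif_pos hS]
  refine max_le_max (Finset.sup'_mono_fun fun j _ => (add_le_add_iff_left _).2 ?_)
    (max_le_max hxy le_rfl)
  exact integral_mono (integrable_valueFn_max hY hYB _ x (hY j) (hYB j))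
    (integrable_valueFn_max hY hYB _ y (hY j) (hYB j))
    fun ω => ih _ (Finset.erase_ssubset j.2) (max_le_max hxy le_rfl)

end Regularity

theorem abs_valueFn_sub_valueFn_le {X Xe : Fin N → Ω → ℝ} (hX : ∀ j, Measurable (X j))
    (hXe : ∀ j, Measurable (Xe j)) (hXB : ∀ j ω, |X j ω| ≤ B) (hXeB : ∀ j ω, |Xe j ω| ≤ B)
    {ε : ℝ} (hε : 0 ≤ ε) (S : Finset (Fin N))
    (hφ : ∀ j ∈ S, ∀ φ : ℝ → ℝ, Monotone φ → LipschitzWith 1 φ →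
      |(∫ ω, φ (Xe j ω) ∂P) - (∫ ω, φ (X j ω) ∂P)| ≤ ε)
    (hmean : ∀ j ∈ S, |(∫ ω, Xe j ω ∂P) - (∫ ω, X j ω ∂P)| ≤ ε) (x : ℝ) :
    |valueFn P c Xe x S - valueFn P c X x S| ≤ S.card * ε := by
  induction S using Finset.strongInduction generalizing x with
  | H S ih =>
  rcases S.eq_empty_or_nonempty with rfl | hS
  · simp
  rw [valueFn, valueFn, dif_pos hS, dif_pos hS]
  refine (abs_max_sub_max_le_max _ _ _ _).trans (max_le ?_ ?_)
  · refine Finset.abs_sup'_sub_sup'_le _ fun ⟨j, hj⟩ _ => ?_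
    set S' := S.erase j
    have hrec : |∫ ω, valueFn P c Xe (max x (Xe j ω)) S' ∂P -
        ∫ ω, valueFn P c X (max x (Xe j ω)) S' ∂P| ≤ S'.card * ε :=
      abs_integral_sub_integral_le (integrable_valueFn_max hXe hXeB S' x (hXe j) (hXeB j))
        (integrable_valueFn_max hX hXB S' x (hXe j) (hXeB j))
        fun ω => ih S' (Finset.erase_ssubset hj) (fun i hi => hφ i (Finset.mem_of_mem_erase hi))
          (fun i hi => hmean i (Finset.mem_of_mem_erase hi)) _
    have hlaw : |∫ ω, valueFn P c X (max x (Xe j ω)) S' ∂P -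
        ∫ ω, valueFn P c X (max x (X j ω)) S' ∂P| ≤ ε :=
      hφ j hj _ (fun _ _ h => monotone_valueFn hX hXB S' (max_le_max le_rfl h))
        ((lipschitzWith_valueFn hX hXB S').comp_const_max x)
    rw [add_sub_add_left_eq_sub, ← Finset.card_erase_add_one hj, Nat.cast_succ, add_one_mul]
    exact (abs_sub_le _ _ _).trans (add_le_add hrec hlaw)
  · refine (abs_max_sub_max_le_max _ _ _ _).trans (max_le ?_ ?_)
    · rw [sub_self, abs_zero]
      positivity
    exact (Finset.abs_sup'_sub_sup'_le hS hmean).trans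
      (le_mul_of_one_le_left hε (mod_cast hS.card_pos))

end ValueFn

theorem stmt_16_general {Ω : Type} [MeasurableSpace Ω] (P : Measure Ω) [IsProbabilityMeasure P]
    {N : ℕ} (c : Fin N → ℝ)
    (X Xe : Fin N → Ω → ℝ)
    (hmeas : ∀ j, Measurable (X j)) (hmeas' : ∀ j, Measurable (Xe j))
    (B : ℝ)
    (hrange : ∀ j ω, X j ω ∈ Set.Icc (0 : ℝ) B)
    (hrange' : ∀ j ω, Xe j ω ∈ Set.Icc (0 : ℝ) B)
    (ε : ℝ) (hε : 0 ≤ ε) (S : Finset (Fin N))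
    (hφ : ∀ j ∈ S, ∀ φ : ℝ → ℝ, Monotone φ → LipschitzWith 1 φ →
      |(∫ ω, φ (Xe j ω) ∂P) - (∫ ω, φ (X j ω) ∂P)| ≤ ε)
    (hmean : ∀ j ∈ S, |(∫ ω, Xe j ω ∂P) - (∫ ω, X j ω ∂P)| ≤ ε) :
    ∀ x ∈ Set.Icc (0 : ℝ) B,
      |valueFn P c Xe x S - valueFn P c X x S| ≤ (S.card : ℝ) * ε := by
  have hbound {Y : Fin N → Ω → ℝ} (hY : ∀ j ω, Y j ω ∈ Set.Icc 0 B) (j : Fin N) (ω : Ω) :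
      |Y j ω| ≤ B :=
    abs_le.2 ⟨by linarith [(hY j ω).1, (hY j ω).2], (hY j ω).2⟩
  exact fun x _ => abs_valueFn_sub_valueFn_le hmeas hmeas' (hbound hrange) (hbound hrange') hε S
    hφ hmean x

theorem stmt_16 {Ω : Type} [MeasurableSpace Ω] (P : Measure Ω) [IsProbabilityMeasure P]
    {N : ℕ} (c : Fin N → ℝ) (hc : ∀ j, 0 ≤ c j)
    (X Xe : Fin N → Ω → ℝ)
    (hmeas : ∀ j, Measurable (X j)) (hmeas' : ∀ j, Measurable (Xe j))
    (hindep : iIndepFun X P)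
    (B : ℝ) (hB : 0 ≤ B)
    (hrange : ∀ j ω, X j ω ∈ Set.Icc (0 : ℝ) B)
    (hrange' : ∀ j ω, Xe j ω ∈ Set.Icc (0 : ℝ) B)
    (ε : ℝ) (hε : 0 ≤ ε) (S : Finset (Fin N))
    (hφ : ∀ j ∈ S, ∀ φ : ℝ → ℝ, Monotone φ → LipschitzWith 1 φ →
      |(∫ ω, φ (Xe j ω) ∂P) - (∫ ω, φ (X j ω) ∂P)| ≤ ε)
    (hmean : ∀ j ∈ S, |(∫ ω, Xe j ω ∂P) - (∫ ω, X j ω ∂P)| ≤ ε) :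
    ∀ x ∈ Set.Icc (0 : ℝ) B,
      |valueFn P c Xe x S - valueFn P c X x S| ≤ (S.card : ℝ) * ε :=
  stmt_16_general P c X Xe hmeas hmeas' B hrange hrange' ε hε S hφ hmean
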